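/- In the formal power series ring, the quantum dilogarithm \phi(x) = \prod_{i \geq 0}(1 - q^i x) satisfies the Euler expansion \phi(x) = \sum_{n \geq 0} (-1)^n q^{n(n-1)/2} x^n / (q)_n. -/

import Mathlib

open MvPowerSeries

/-- Coefficientwise topology on formal power series in the two variables `q` and `x`. -/
noncomputable instance : TopologicalSpace (MvPowerSeries (Fin 2) ℚ) :=
  inferInstanceAs (TopologicalSpace ((Fin 2 →₀ ℕ) → ℚ))

noncomputable def q : MvPowerSeries (Fin 2) ℚ := X 0
noncomputable def x : MvPowerSeries (Fin 2) ℚ := X 1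

/-- The q-Pochhammer symbol `(q;q)_n`. -/
noncomputable def qPoch (n : ℕ) : MvPowerSeries (Fin 2) ℚ :=
  ∏ i ∈ Finset.range n, (1 - q ^ (i + 1))

/-!
Both sides `F` solve the functional equation `F(q, x) = (1 - x) F(q, qx)` and have
`F(q, 0) = 1`. For the product this is the splitting off of the factor `i = 0`; for the series
it follows from `(1 - qⁿ) tₙ = -x qⁿ⁻¹ tₙ₋₁` for its terms `tₙ`. The solution is unique:
comparing coefficients of `qᵃ xᵇ` expresses the coefficient at `(a, b)` through those at
`(a - b, b)` and `(a - b + 1, b - 1)`, so a double induction on `b` and `a`, starting from the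
`x`-free part, determines everything.
-/

open WithPiTopology

-- The topology above is `WithPiTopology`'s, whose instances are only scoped.
instance : T2Space (MvPowerSeries (Fin 2) ℚ) := instT2Space
instance : IsTopologicalRing (MvPowerSeries (Fin 2) ℚ) := instIsTopologicalRing _ _

namespace MvPowerSeries

theorem tendsto_order_atTop_nhds_top_of_le {σ R : Type*} [Semiring R]
    {f : ℕ → MvPowerSeries σ R} (h : ∀ i : ℕ, (i : ℕ∞) ≤ (f i).order) :
    Filter.Tendsto (fun i => (f i).order) Filter.atTop (nhds ⊤) :=
  ENat.tendsto_nhds_top_iff_natCast_lt.mpr fun n => Filter.eventually_atTop.mpr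
    ⟨n + 1, fun i hi => (ENat.natCast_lt_natCast.mpr hi).trans_le (h i)⟩

theorem WithPiTopology.continuous_of_coeff_eq_ite {σ R : Type*} [Semiring R] [TopologicalSpace R]
    {g : MvPowerSeries σ R → MvPowerSeries σ R} (p : (σ →₀ ℕ) → Prop) [DecidablePred p]
    (m : (σ →₀ ℕ) → (σ →₀ ℕ))
    (h : ∀ f e, coeff e (g f) = if p e then coeff (m e) f else 0) :
    Continuous g := by
  refine continuous_pi fun e => ?_
  change Continuous fun f => coeff e (g f)
  simp_rw [h]
  split_ifs
  · exact continuous_coeff R _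
  · exact continuous_const

end MvPowerSeries

theorem Finsupp.ext_fin_two {d e : Fin 2 →₀ ℕ} (h0 : d 0 = e 0) (h1 : d 1 = e 1) : d = e := by
  ext i; fin_cases i <;> assumption

theorem Finsupp.eq_add_single_zero_iff (d e : Fin 2 →₀ ℕ) :
    e = d + single 0 (d 1) ↔ e 1 ≤ e 0 ∧ d = e - single 0 (e 1) := by
  constructor
  · rintro rfl
    exact ⟨by simp, ext_fin_two (by simp) (by simp)⟩
  · rintro ⟨he, rfl⟩
    exact ext_fin_two (by simp [Nat.sub_add_cancel he]) (by simp)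

theorem hasSubst_q_mul_x (c : MvPowerSeries (Fin 2) ℚ) : HasSubst ![q, c * x] :=
  hasSubst_of_constantCoeff_zero fun s => by fin_cases s <;> simp [q, x]

/-- `F(q, x) ↦ F(q, qx)`. -/
noncomputable def qDilate : MvPowerSeries (Fin 2) ℚ →ₐ[ℚ] MvPowerSeries (Fin 2) ℚ :=
  substAlgHom (hasSubst_q_mul_x q)

/-- `F(q, x) ↦ F(q, 0)`. -/
noncomputable def xFreePart : MvPowerSeries (Fin 2) ℚ →ₐ[ℚ] MvPowerSeries (Fin 2) ℚ :=
  substAlgHom (hasSubst_q_mul_x 0)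

theorem qDilate_q : qDilate q = q := substAlgHom_X _ 0

theorem qDilate_x : qDilate x = q * x := substAlgHom_X _ 1

theorem xFreePart_q : xFreePart q = q := substAlgHom_X _ 0

theorem xFreePart_x : xFreePart x = 0 := (substAlgHom_X _ 1).trans (zero_mul x)

theorem coeff_qDilate (f : MvPowerSeries (Fin 2) ℚ) (e : Fin 2 →₀ ℕ) :
    coeff e (qDilate f) = if e 1 ≤ e 0 then coeff (e - Finsupp.single 0 (e 1)) f else 0 := by
  have hprod (d : Fin 2 →₀ ℕ) : (d.prod fun s n => (![q, q * x] s) ^ n) =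
      monomial (d + Finsupp.single 0 (d 1)) 1 := by
    rw [Finsupp.prod_fintype _ _ (by simp), Fin.prod_univ_two]
    simp only [q, x, Matrix.cons_val_zero, Matrix.cons_val_one, Matrix.cons_val_fin_one, mul_pow,
      X_pow_eq, monomial_mul_monomial, mul_one]
    congr 2
    exact Finsupp.ext_fin_two (by simp) (by simp)
  rw [qDilate, substAlgHom_apply, coeff_subst (hasSubst_q_mul_x q) f e,
    finsum_eq_single _ (e - Finsupp.single 0 (e 1))]
  · simp only [hprod, coeff_monomial, Finsupp.eq_add_single_zero_iff]
    simp
  · intro d hd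
    simp [hprod, coeff_monomial, Finsupp.eq_add_single_zero_iff, hd]

theorem coeff_xFreePart (f : MvPowerSeries (Fin 2) ℚ) (e : Fin 2 →₀ ℕ) :
    coeff e (xFreePart f) = if e 1 = 0 then coeff e f else 0 := by
  have hprod (d : Fin 2 →₀ ℕ) : (d.prod fun s n => (![q, 0 * x] s) ^ n) =
      if d 1 = 0 then monomial d 1 else 0 := by
    rw [Finsupp.prod_fintype _ _ (by simp), Fin.prod_univ_two]
    split_ifs with h
    · simp only [q, h, Matrix.cons_val_zero, Matrix.cons_val_one, Matrix.cons_val_fin_one,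
        pow_zero, mul_one, X_pow_eq]
      congr 2
      exact Finsupp.ext_fin_two (by simp) (by simp [h])
    · simp [h]
  rw [xFreePart, substAlgHom_apply, coeff_subst (hasSubst_q_mul_x 0) f e, finsum_eq_single _ e]
  · simp only [hprod]
    split_ifs <;> simp
  · intro d hd
    simp only [hprod]
    split_ifs <;> simp [coeff_monomial, Ne.symm hd]

theorem continuous_qDilate : Continuous qDilate :=
  continuous_of_coeff_eq_ite _ _ coeff_qDilate

theorem continuous_xFreePart : Continuous xFreePart :=
  continuous_of_coeff_eq_ite _ _ coeff_xFreePart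

theorem coeff_one_sub_x_mul (K : MvPowerSeries (Fin 2) ℚ) (e : Fin 2 →₀ ℕ) :
    coeff e ((1 - x) * K) =
      coeff e K - if 1 ≤ e 1 then coeff (e - Finsupp.single 1 1) K else 0 := by
  rw [sub_mul, one_mul, map_sub, x, X, coeff_monomial_mul, one_mul]
  simp only [Finsupp.single_le_iff]

theorem eq_zero_of_eq_one_sub_x_mul_qDilate {H : MvPowerSeries (Fin 2) ℚ}
    (hH : H = (1 - x) * qDilate H) (h0 : xFreePart H = 0) : H = 0 := by
  have hfree (e : Fin 2 →₀ ℕ) (he : e 1 = 0) : coeff e H = 0 := by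
    simpa [coeff_xFreePart, he] using congr_arg (coeff e) h0
  suffices ∀ b e, e 1 = b → coeff e H = 0 from ext fun e => this _ e rfl
  intro b
  induction b with
  | zero => exact hfree
  | succ b ihb =>
    intro e
    induction h : e 0 using Nat.strong_induction_on generalizing e with
    | _ a iha =>
      intro he
      rw [hH, coeff_one_sub_x_mul, coeff_qDilate, coeff_qDilate]
      have hlower : coeff (e - Finsupp.single 1 1 -
          Finsupp.single 0 ((e - Finsupp.single 1 1 : Fin 2 →₀ ℕ) 1)) H = 0 :=
        ihb _ (by simp [he])
      rw [hlower, ite_self, ite_self, sub_zero]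
      split_ifs with hle
      · exact iha (a - (b + 1)) (by omega) _ (by simp [h, he]) (by simp [he])
      · rfl

theorem eq_of_eq_one_sub_x_mul_qDilate {F G : MvPowerSeries (Fin 2) ℚ}
    (hF : F = (1 - x) * qDilate F) (hG : G = (1 - x) * qDilate G)
    (h0 : xFreePart F = xFreePart G) : F = G :=
  sub_eq_zero.mp <| eq_zero_of_eq_one_sub_x_mul_qDilate
    (by rw [map_sub, mul_sub, ← hF, ← hG]) (by rw [map_sub, h0, sub_self])

theorem constantCoeff_qPoch (n : ℕ) : constantCoeff (qPoch n) = 1 := by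
  simp [qPoch, map_prod, q]

theorem map_qPoch_inv {φ : MvPowerSeries (Fin 2) ℚ →ₐ[ℚ] MvPowerSeries (Fin 2) ℚ}
    (hφ : φ q = q) (n : ℕ) : φ (qPoch n)⁻¹ = (qPoch n)⁻¹ := by
  have hne : constantCoeff (qPoch n) ≠ 0 := by simp [constantCoeff_qPoch]
  have hfix : φ (qPoch n) = qPoch n := by simp [qPoch, map_prod, hφ]
  rw [MvPowerSeries.eq_inv_iff_mul_eq_one hne]
  nth_rw 2 [← hfix]
  rw [← map_mul, MvPowerSeries.inv_mul_cancel _ hne, map_one]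

theorem qPoch_succ_inv_mul (n : ℕ) :
    (qPoch (n + 1))⁻¹ * (1 - q ^ (n + 1)) = (qPoch n)⁻¹ := by
  have hne (m : ℕ) : constantCoeff (qPoch m) ≠ 0 := by simp [constantCoeff_qPoch]
  have hsucc : qPoch (n + 1) = qPoch n * (1 - q ^ (n + 1)) := Finset.prod_range_succ _ _
  rw [MvPowerSeries.eq_inv_iff_mul_eq_one (hne n), mul_assoc, mul_comm (1 - _), ← hsucc,
    MvPowerSeries.inv_mul_cancel _ (hne _)]

theorem multipliable_one_sub_q_pow_mul_x : Multipliable fun i : ℕ => 1 - q ^ i * x := by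
  simp_rw [sub_eq_add_neg]
  refine multipliable_one_add_of_tendsto_order_atTop_nhds_top
    (tendsto_order_atTop_nhds_top_of_le fun i => ?_)
  rw [order_neg]
  calc (i : ℕ∞) ≤ (q ^ i).order := le_order_pow_of_constantCoeff_eq_zero i (by simp [q])
    _ ≤ (q ^ i).order + x.order := le_self_add
    _ ≤ (q ^ i * x).order := le_order_mul

theorem qDilate_one_sub_q_pow_mul_x (i : ℕ) :
    qDilate (1 - q ^ i * x) = 1 - q ^ (i + 1) * x := by
  rw [map_sub, map_one, map_mul, map_pow, qDilate_q, qDilate_x, pow_succ, mul_assoc]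

theorem tprod_one_sub_q_pow_mul_x_eq_one_sub_x_mul_qDilate :
    (∏' i : ℕ, (1 - q ^ i * x)) = (1 - x) * qDilate (∏' i : ℕ, (1 - q ^ i * x)) := by
  have hdil := multipliable_one_sub_q_pow_mul_x.hasProd.map qDilate continuous_qDilate
  simp only [Function.comp_def, qDilate_one_sub_q_pow_mul_x] at hdil
  rw [← hdil.tprod_eq]
  simpa only [pow_zero, one_mul] using
    tprod_eq_zero_mul' (f := fun i => 1 - q ^ i * x) hdil.multipliable

theorem xFreePart_tprod_one_sub_q_pow_mul_x : xFreePart (∏' i : ℕ, (1 - q ^ i * x)) = 1 := by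
  rw [multipliable_one_sub_q_pow_mul_x.map_tprod _ continuous_xFreePart]
  simp [xFreePart_q, xFreePart_x]

noncomputable def eulerTerm (n : ℕ) : MvPowerSeries (Fin 2) ℚ :=
  (-1) ^ n * q ^ (n * (n - 1) / 2) * x ^ n * (qPoch n)⁻¹

theorem eulerTerm_zero : eulerTerm 0 = 1 := by
  simp [eulerTerm, qPoch]

theorem summable_eulerTerm : Summable eulerTerm := by
  refine summable_of_tendsto_order_atTop_nhds_top (tendsto_order_atTop_nhds_top_of_le fun n => ?_)
  calc (n : ℕ∞) ≤ (x ^ n).order := le_order_pow_of_constantCoeff_eq_zero n (by simp [x])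
    _ ≤ ((-1) ^ n * q ^ (n * (n - 1) / 2)).order + (x ^ n).order := le_add_self
    _ ≤ ((-1) ^ n * q ^ (n * (n - 1) / 2) * x ^ n).order := le_order_mul
    _ ≤ _ := le_self_add
    _ ≤ (eulerTerm n).order := le_order_mul

theorem qDilate_eulerTerm (n : ℕ) : qDilate (eulerTerm n) = q ^ n * eulerTerm n := by
  simp only [eulerTerm, map_mul, map_pow, map_neg, map_one, qDilate_q, qDilate_x,
    map_qPoch_inv qDilate_q]
  ring

theorem eulerTerm_succ_sub_qDilate (n : ℕ) :
    eulerTerm (n + 1) - qDilate (eulerTerm (n + 1)) = -x * qDilate (eulerTerm n) := by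
  rw [qDilate_eulerTerm, qDilate_eulerTerm, ← one_sub_mul, mul_comm, eulerTerm, mul_assoc,
    qPoch_succ_inv_mul, Nat.triangle_succ, eulerTerm]
  ring

theorem tsum_eulerTerm_eq_one_sub_x_mul_qDilate :
    (∑' n, eulerTerm n) = (1 - x) * qDilate (∑' n, eulerTerm n) := by
  have hs := summable_eulerTerm
  have hds : Summable fun n => qDilate (eulerTerm n) := hs.map qDilate continuous_qDilate
  have hdiff : (∑' n, eulerTerm n) - qDilate (∑' n, eulerTerm n) =
      -x * qDilate (∑' n, eulerTerm n) := by
    rw [hs.map_tsum _ continuous_qDilate, ← hs.tsum_sub hds, (hs.sub hds).tsum_eq_zero_add]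
    simp_rw [eulerTerm_succ_sub_qDilate, eulerTerm_zero, map_one, sub_self, zero_add]
    exact hds.tsum_mul_left (-x)
  linear_combination hdiff

theorem xFreePart_eulerTerm (n : ℕ) : xFreePart (eulerTerm n) = if n = 0 then 1 else 0 := by
  rcases n with _ | n
  · rw [eulerTerm_zero, map_one, if_pos rfl]
  · simp [eulerTerm, xFreePart_x]

theorem xFreePart_tsum_eulerTerm : xFreePart (∑' n, eulerTerm n) = 1 := by
  rw [summable_eulerTerm.map_tsum _ continuous_xFreePart]
  simp_rw [xFreePart_eulerTerm]
  exact tsum_ite_eq 0 1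

/-- The quantum dilogarithm `φ(x) = ∏_{i ≥ 0} (1 - qⁱ x)` satisfies the Euler expansion
`φ(x) = ∑_{n ≥ 0} (-1)ⁿ q^{n(n-1)/2} xⁿ / (q)_n`, as formal power series in `q` and `x`. -/
theorem quantum_dilogarithm_euler_expansion :
    (∏' i : ℕ, (1 - q ^ i * x)) =
      ∑' n : ℕ, ((-1 : MvPowerSeries (Fin 2) ℚ)) ^ n * q ^ (n * (n - 1) / 2) * x ^ n *
        (qPoch n)⁻¹ :=
  eq_of_eq_one_sub_x_mul_qDilate tprod_one_sub_q_pow_mul_x_eq_one_sub_x_mul_qDilate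
    tsum_eulerTerm_eq_one_sub_x_mul_qDilate
    (xFreePart_tprod_one_sub_q_pow_mul_x.trans xFreePart_tsum_eulerTerm.symm)
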